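/- For the optimal GMM weight, the matrix Σ − Σ_w is positive semidefinite for any weight choice: given a full-column-rank r × d matrix Γ and positive definite V, (ΓᵀWΓ)⁻¹ΓᵀW V WᵀΓ(ΓᵀWᵀΓ)⁻¹ − (ΓᵀV⁻¹Γ)⁻¹ is positive semidefinite for any symmetric positive definite W. -/

import Mathlib

/-!
Put E = (ΓᴴWΓ)⁻¹, F = (ΓᴴV⁻¹Γ)⁻¹ and N = WΓE − V⁻¹ΓF. In the expansion of NᴴVN both cross terms
collapse to −F (as E is the inverse of ΓᴴWΓ) and the last term FΓᴴV⁻¹ΓF is F, so Σ_W − Σ_* = NᴴVN,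
which is positive semidefinite because V is. Full column rank of Γ makes ΓᴴWΓ and ΓᴴV⁻¹Γ positive
definite, hence invertible.
-/

open Matrix

namespace Matrix

variable {m n R : Type*} [Fintype n]

theorem mulVec_injective_of_rank_eq_card [Field R] {A : Matrix m n R}
    (h : A.rank = Fintype.card n) : Function.Injective A.mulVec := by
  rw [mulVec_injective_iff, linearIndependent_iff_card_eq_finrank_span, ← h,
    rank_eq_finrank_span_cols, Set.finrank]

variable [Fintype m] [DecidableEq m] [DecidableEq n]

theorem gmm_sandwich_sub_inv_eq [CommRing R] [StarRing R] {Γ : Matrix m n R}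
    {V W : Matrix m m R} (hV : V.IsHermitian) (hW : W.IsHermitian) (hVu : IsUnit V.det)
    (hA : IsUnit (Γᴴ * W * Γ).det) (hC : IsUnit (Γᴴ * V⁻¹ * Γ).det) :
    (Γᴴ * W * Γ)⁻¹ * Γᴴ * W * V * W * Γ * (Γᴴ * W * Γ)⁻¹ - (Γᴴ * V⁻¹ * Γ)⁻¹ =
      (W * Γ * (Γᴴ * W * Γ)⁻¹ - V⁻¹ * Γ * (Γᴴ * V⁻¹ * Γ)⁻¹)ᴴ * V *
        (W * Γ * (Γᴴ * W * Γ)⁻¹ - V⁻¹ * Γ * (Γᴴ * V⁻¹ * Γ)⁻¹) := by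
  set A := Γᴴ * W * Γ
  set C := Γᴴ * V⁻¹ * Γ
  have hA_left (X : Matrix n n R) : A⁻¹ * (Γᴴ * (W * (Γ * X))) = X := by
    simpa only [A, Matrix.mul_assoc] using nonsing_inv_mul_cancel_left A X hA
  have hA_right : Γᴴ * (W * (Γ * A⁻¹)) = 1 := by
    simpa only [A, Matrix.mul_assoc] using mul_nonsing_inv A hA
  have hC_left (X : Matrix n n R) : C⁻¹ * (Γᴴ * (V⁻¹ * (Γ * X))) = X := by
    simpa only [C, Matrix.mul_assoc] using nonsing_inv_mul_cancel_left C X hC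
  have hA_herm : A⁻¹ᴴ = A⁻¹ := (isHermitian_conjTranspose_mul_mul Γ hW).inv
  have hC_herm : C⁻¹ᴴ = C⁻¹ := (isHermitian_conjTranspose_mul_mul Γ hV.inv).inv
  have hVinv_herm : V⁻¹ᴴ = V⁻¹ := hV.inv
  simp only [conjTranspose_sub, conjTranspose_mul, hW.eq,
    hA_herm, hC_herm, hVinv_herm, Matrix.sub_mul, Matrix.mul_sub, Matrix.mul_assoc,
    mul_nonsing_inv_cancel_left V _ hVu, nonsing_inv_mul_cancel_left V _ hVu, hA_left, hC_left,
    hA_right, Matrix.mul_one]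
  abel

theorem posSemidef_gmm_sandwich_sub_inv [Field R] [PartialOrder R] [StarRing R]
    {Γ : Matrix m n R} (hΓ : Function.Injective Γ.mulVec)
    {V W : Matrix m m R} (hV : V.PosDef) (hW : W.PosDef) :
    ((Γᴴ * W * Γ)⁻¹ * Γᴴ * W * V * W * Γ * (Γᴴ * W * Γ)⁻¹ - (Γᴴ * V⁻¹ * Γ)⁻¹).PosSemidef := by
  rw [gmm_sandwich_sub_inv_eq hV.isHermitian hW.isHermitian
    ((isUnit_iff_isUnit_det _).mp hV.isUnit)
    ((isUnit_iff_isUnit_det _).mp (hW.conjTranspose_mul_mul_same hΓ).isUnit)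
    ((isUnit_iff_isUnit_det _).mp (hV.inv.conjTranspose_mul_mul_same hΓ).isUnit)]
  exact hV.posSemidef.conjTranspose_mul_mul_same _

end Matrix

/-- Optimality of the GMM weight W = V⁻¹: for Γ of full column rank and V, W symmetric
positive definite, Σ_W − Σ_* is positive semidefinite, where
Σ_W = (ΓᵀWΓ)⁻¹ΓᵀWVWΓ(ΓᵀWΓ)⁻¹ and Σ_* = (ΓᵀV⁻¹Γ)⁻¹. -/
theorem stmt_16 {r d : ℕ} (Γ : Matrix (Fin r) (Fin d) ℝ) (hrank : Γ.rank = d)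
    (V W : Matrix (Fin r) (Fin r) ℝ) (hV : V.PosDef) (hW : W.PosDef) :
    ((Γᵀ * W * Γ)⁻¹ * Γᵀ * W * V * W * Γ * (Γᵀ * W * Γ)⁻¹
      - (Γᵀ * V⁻¹ * Γ)⁻¹).PosSemidef := by
  have hΓ := mulVec_injective_of_rank_eq_card (by rwa [Fintype.card_fin])
  have h := posSemidef_gmm_sandwich_sub_inv hΓ hV hW
  rwa [conjTranspose_eq_transpose_of_trivial] at h
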